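/- arXiv:1805.00706 — 4 statements merged into one kernel-verified Lean document; each statement's English description precedes it below -/
import Mathlib

section
/- Let C be a family of interlocked outer cycles with central cycle C_c, and suppose that for every cycle C_i in C \ {C_c}, all cycles in C intersecting C_i (including C_i itself) share at least one common vertex. If there exist two distinct central cycles in C, then all n cycles in C share at least one common vertex. -/
/-- A cycle (given by its vertex set) `C c` is central in the family `C`. -/
def IsCentral {V : Type*} [DecidableEq V] {n : ℕ} (C : Fin n → Finset V) (c : Fin n) : Prop :=
  (∀ i, i ≠ c → (C i ∩ C c).Nonempty) ∧
    (∀ i j, i ≠ c → j ≠ c → i ≠ j → (C i ∩ C j).Nonempty → (C i ∩ C j ∩ C c).Nonempty)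

/-- if for every central cycle `C_c` and every cycle `C_i` in the family, all
cycles intersecting `C_i` (including `C_i`) share a common vertex, and there exist two
distinct central cycles, then all `n` cycles share a common vertex. -/
theorem common_vertex_of_two_central_cycles
    {V : Type*} [DecidableEq V] {n : ℕ} (hn : 0 < n)
    (C : Fin n → Finset V)
    (hLem : ∀ c, IsCentral C c → ∀ i, ∃ v : V, v ∈ C i ∧
      ∀ j, (C j ∩ C i).Nonempty → v ∈ C j)
    (hTwo : ∃ c₁ c₂ : Fin n, c₁ ≠ c₂ ∧ IsCentral C c₁ ∧ IsCentral C c₂) :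
    ∃ v : V, ∀ i, v ∈ C i := by
  obtain ⟨c₁, c₂, hne, h1, h2⟩ := hTwo
  obtain ⟨v, hv, hall⟩ := hLem c₁ h1 c₂
  refine ⟨v, fun i => ?_⟩
  by_cases h : i = c₂
  · subst h; exact hv
  · exact hall i (h2.1 i h)
end

section
/- Let C be a family of interlocked outer cycles with a unique central cycle C_c, such that for every cycle C_j in C \ {C_c}, all cycles in C intersecting C_j (including C_j) share a common vertex. For C_j in C \ {C_c}, let C_j* denote the set of cycles in C \ {C_c} intersecting C_j. Then every cycle in C \ (C_j* ∪ {C_c}) is vertex-disjoint from every cycle in C_j*. -/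
/-- with a unique central cycle `C_c` and the common-vertex property for
every non-central cycle, every cycle of `C \ (C_j* ∪ {C_c})` is vertex-disjoint from
every cycle of `C_j* = { C_k ∈ C \ {C_c} : V(C_k) ∩ V(C_j) ≠ ∅ }`. -/
theorem cycles_outside_star_disjoint_from_star
    {V : Type*} [DecidableEq V] {n : ℕ}
    (C : Fin n → Finset V) (c : Fin n)
    (hc : IsCentral C c)
    (hUnique : ∀ c', IsCentral C c' → c' = c)
    (hLem : ∀ j, j ≠ c → ∃ v : V, v ∈ C j ∧ ∀ k, (C k ∩ C j).Nonempty → v ∈ C k)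
    (j : Fin n) (hj : j ≠ c) :
    ∀ k, k ≠ c → ¬ (C k ∩ C j).Nonempty →
      ∀ m, m ≠ c → (C m ∩ C j).Nonempty → Disjoint (C k) (C m) := by
  intro k hk hkj m hm hmj
  rw [Finset.disjoint_left]
  intro x hxk hxm
  obtain ⟨v, hvm, hv⟩ := hLem m hm
  apply hkj
  have h1 : v ∈ C k := hv k ⟨x, Finset.mem_inter.mpr ⟨hxk, hxm⟩⟩
  have h2 : v ∈ C j := hv j (by rwa [Finset.inter_comm] at hmj)
  exact ⟨v, Finset.mem_inter.mpr ⟨h1, h2⟩⟩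
end

section
/- Suppose C is a finite family of cycles with a central cycle C_c, satisfying: (i) for each non-central cycle C_j, the set C_j* of non-central cycles intersecting C_j has a common vertex v_j lying on C_j; (ii) distinct 'clusters' C_j* are either equal or consist of pairwise disjoint cycles across clusters. Then the number of distinct clusters equals both the maximum size of a pairwise-disjoint subfamily of C and the minimum size of a vertex set hitting every cycle in C \ {C_c}; moreover removing one vertex of C_c in addition hits every cycle of C, so the minimum hitting set of C has size at most (number of clusters) + 1. -/
/-!
The common vertex of a cluster makes intersection of non-central cycles transitive: if `C_i`
and `C_k` both meet `C_j`, both pass through the common vertex of `C_j*`. So the clusters are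
the classes of an equivalence relation and distinct clusters are vertex-disjoint. One cycle
from each cluster is a packing, the common vertices of the clusters form a hitting set of the
same size, and weak duality (a packing is never larger than a hitting set) makes both optimal.
The central cycle meets every other cycle, so a packing containing it is a singleton, and one
extra vertex of it extends the hitting set to the whole family.
-/

open Finset

section

variable {ι V : Type*}

theorem pairwiseDisjoint_elim_map_some {D : ι → Finset V} {C : Finset V} {R : Finset ι}
    (hR : (R : Set ι).PairwiseDisjoint D) :
    ((R.map .some : Finset (Option ι)) : Set (Option ι)).PairwiseDisjoint
      (Option.elim · C D) := by
  rw [coe_map]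
  exact (Option.some_injective ι).injOn.pairwiseDisjoint_image.2 hR

variable [DecidableEq V]

theorem card_le_card_of_pairwiseDisjoint_of_hits {D : ι → Finset V} {T : Finset ι}
    {S : Finset V} (hT : (T : Set ι).PairwiseDisjoint D) (hS : ∀ i ∈ T, (S ∩ D i).Nonempty) :
    #T ≤ #S :=
  card_le_card_of_forall_subsingleton (fun i x => x ∈ D i)
    (fun i hi => let ⟨x, hx⟩ := hS i hi; ⟨x, mem_inter.1 hx⟩)
    fun x _ _ hi _ hj => hT.elim_finset hi.1 hj.1 x hi.2 hj.2

theorem card_le_of_pairwiseDisjoint_elim {D : ι → Finset V} {C : Finset V}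
    (hC : ∀ j, (D j ∩ C).Nonempty) {k : ℕ} (hk : 1 ≤ k)
    (hDk : ∀ T : Finset ι, (T : Set ι).PairwiseDisjoint D → #T ≤ k) {T : Finset (Option ι)}
    (hT : (T : Set (Option ι)).PairwiseDisjoint (Option.elim · C D)) : #T ≤ k := by
  by_cases hnone : none ∈ T
  · have hTsub : T ⊆ {none} := by
      rintro (_ | j) hj
      · exact mem_singleton_self none
      · exact absurd (hT hnone hj (Option.some_ne_none j).symm).symm
          (not_disjoint_iff_nonempty_inter.2 (hC j))
    exact (card_le_card hTsub).trans hk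
  · rw [← card_eraseNone_of_not_mem hnone]
    exact hDk _ fun i hi j hj hij =>
      hT (mem_eraseNone.1 hi) (mem_eraseNone.1 hj) ((Option.some_injective ι).ne hij)

/-- `v` is the common vertex of the cluster `C_j*` of all cycles meeting `C_j`. -/
def HasClusterCenters (D : ι → Finset V) : Prop :=
  ∀ j, ∃ v ∈ D j, ∀ k, (D k ∩ D j).Nonempty → v ∈ D k

namespace HasClusterCenters

variable {D : ι → Finset V}

theorem nonempty (hD : HasClusterCenters D) (j : ι) : (D j).Nonempty :=
  let ⟨v, hv, _⟩ := hD j; ⟨v, hv⟩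

theorem inter_nonempty_trans (hD : HasClusterCenters D) {i j k : ι}
    (hij : (D i ∩ D j).Nonempty) (hjk : (D j ∩ D k).Nonempty) : (D i ∩ D k).Nonempty := by
  obtain ⟨v, -, hv⟩ := hD j
  exact ⟨v, mem_inter.2 ⟨hv i hij, hv k (by rwa [inter_comm])⟩⟩

theorem exists_hitting_card_le (hD : HasClusterCenters D) {R : Finset ι}
    (hR : ∀ j, ∃ r ∈ R, (D r ∩ D j).Nonempty) :
    ∃ S : Finset V, #S ≤ #R ∧ ∀ j, (S ∩ D j).Nonempty := by
  choose v _ hv using hD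
  refine ⟨R.image v, card_image_le, fun j => ?_⟩
  obtain ⟨r, hr, hrj⟩ := hR j
  exact ⟨v r, mem_inter.2 ⟨mem_image_of_mem v hr, hv r j (by rwa [inter_comm])⟩⟩

end HasClusterCenters

section Clusters

variable [Fintype ι]

def cluster (D : ι → Finset V) (j : ι) : Finset ι :=
  univ.filter fun a => (D a ∩ D j).Nonempty

def clusters [DecidableEq ι] (D : ι → Finset V) : Finset (Finset ι) :=
  univ.image (cluster D)

variable {D : ι → Finset V}

theorem HasClusterCenters.cluster_eq_iff (hD : HasClusterCenters D) {j k : ι} :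
    cluster D j = cluster D k ↔ (D j ∩ D k).Nonempty := by
  simp only [cluster, Finset.ext_iff, mem_filter, mem_univ, true_and]
  refine ⟨fun h => (h j).1 (by simpa using hD.nonempty j), fun hjk a => ?_⟩
  exact ⟨(hD.inter_nonempty_trans · hjk),
    (hD.inter_nonempty_trans · (by rwa [inter_comm]))⟩

theorem HasClusterCenters.exists_transversal [DecidableEq ι] (hD : HasClusterCenters D) :
    ∃ R : Finset ι, #R = #(clusters D) ∧ (R : Set ι).PairwiseDisjoint D ∧
      ∀ j, ∃ r ∈ R, (D r ∩ D j).Nonempty := by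
  obtain ⟨R, -, hinj, himage⟩ := exists_subset_injOn_image_eq_of_surjOn Set.univ (clusters D)
    fun C hC => by
      obtain ⟨j, -, rfl⟩ := mem_image.1 hC
      exact ⟨j, trivial, rfl⟩
  refine ⟨R, himage ▸ (card_image_of_injOn hinj).symm, fun r hr r' hr' hne => ?_, fun j => ?_⟩
  · by_contra hmeet
    exact hne (hinj hr hr' (hD.cluster_eq_iff.2 (not_disjoint_iff_nonempty_inter.1 hmeet)))
  · have hj : cluster D j ∈ R.image (cluster D) := himage ▸ mem_image_of_mem _ (mem_univ j)
    obtain ⟨r, hr, hrj⟩ := mem_image.1 hj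
    exact ⟨r, hr, hD.cluster_eq_iff.1 hrj⟩

end Clusters

end

theorem clustered_duality_with_central_general
    {V : Type*} [DecidableEq V] {n : ℕ} (hn : 0 < n)
    (D : Fin n → Finset V) (Cc : Finset V)
    (hCc : ∀ j, (D j ∩ Cc).Nonempty)
    (hstar : ∀ j, ∃ v : V, v ∈ D j ∧ ∀ k, (D k ∩ D j).Nonempty → v ∈ D k) :
    ∀ t : ℕ, t = (Finset.univ.image
        (fun j : Fin n => Finset.univ.filter (fun a : Fin n => (D a ∩ D j).Nonempty))).card →
      ((∃ T : Finset (Option (Fin n)), T.card = t ∧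
          ∀ a ∈ T, ∀ b ∈ T, a ≠ b →
            Disjoint (Option.elim a Cc D) (Option.elim b Cc D)) ∧
        (∀ T : Finset (Option (Fin n)),
          (∀ a ∈ T, ∀ b ∈ T, a ≠ b →
            Disjoint (Option.elim a Cc D) (Option.elim b Cc D)) → T.card ≤ t)) ∧
      ((∃ S : Finset V, S.card = t ∧ ∀ j, (S ∩ D j).Nonempty) ∧
        (∀ S : Finset V, (∀ j, (S ∩ D j).Nonempty) → t ≤ S.card)) ∧
      (∃ S : Finset V, S.card ≤ t + 1 ∧ (S ∩ Cc).Nonempty ∧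
        ∀ j, (S ∩ D j).Nonempty) := by
  have hD : HasClusterCenters D := hstar
  intro t ht
  obtain ⟨R, hRcard, hRdisj, hRcover⟩ := hD.exists_transversal
  obtain rfl : t = #R := ht.trans hRcard.symm
  obtain ⟨S, hSR, hS⟩ := hD.exists_hitting_card_le hRcover
  have hRS : #R ≤ #S := card_le_card_of_pairwiseDisjoint_of_hits hRdisj fun r _ => hS r
  have hpacking (T : Finset (Fin n)) (hT : (T : Set (Fin n)).PairwiseDisjoint D) : #T ≤ #R :=
    (card_le_card_of_pairwiseDisjoint_of_hits hT fun i _ => hS i).trans hSR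
  obtain ⟨r, hr, -⟩ := hRcover ⟨0, hn⟩
  obtain ⟨x, hx⟩ := hCc ⟨0, hn⟩
  refine ⟨⟨⟨R.map .some, card_map _,
        fun a ha b hb => pairwiseDisjoint_elim_map_some hRdisj ha hb⟩,
      fun T hT => card_le_of_pairwiseDisjoint_elim hCc (card_pos.2 ⟨r, hr⟩) hpacking
        fun a ha b hb => hT a ha b hb⟩,
    ⟨⟨S, hSR.antisymm hRS, hS⟩,
      fun S' hS' => card_le_card_of_pairwiseDisjoint_of_hits hRdisj fun r _ => hS' r⟩,
    ⟨insert x S, (card_insert_le x S).trans (by omega),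
      ⟨x, mem_inter.2 ⟨mem_insert_self x S, (mem_inter.1 hx).2⟩⟩,
      fun j => (hS j).mono (inter_subset_inter (subset_insert x S) subset_rfl)⟩⟩

/-- clustered cycle family with central cycle. The family is indexed by
`Option (Fin n)`: `none` is the central cycle `C_c` and `some j` are the other cycles.
If every cluster `C_j*` has a common vertex and distinct clusters are pairwise
vertex-disjoint, then the number of distinct clusters `t` equals both the maximum size of
a pairwise-disjoint subfamily of `C` and the minimum size of a vertex set hitting every
non-central cycle; moreover adding one vertex of `C_c` hits every cycle, so a hitting set
of `C` of size at most `t + 1` exists. -/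
theorem clustered_duality_with_central
    {V : Type*} [DecidableEq V] {n : ℕ} (hn : 0 < n)
    (D : Fin n → Finset V) (Cc : Finset V)
    (hne : ∀ j, (D j).Nonempty)
    (hCc : ∀ j, (D j ∩ Cc).Nonempty)
    (hstar : ∀ j, ∃ v : V, v ∈ D j ∧ ∀ k, (D k ∩ D j).Nonempty → v ∈ D k)
    (hclusters : ∀ j k : Fin n,
      ({a : Fin n | (D a ∩ D j).Nonempty} ≠ {a : Fin n | (D a ∩ D k).Nonempty}) →
      ∀ a, (D a ∩ D j).Nonempty → ∀ b, (D b ∩ D k).Nonempty → Disjoint (D a) (D b)) :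
    ∀ t : ℕ, t = (Finset.univ.image
        (fun j : Fin n => Finset.univ.filter (fun a : Fin n => (D a ∩ D j).Nonempty))).card →
      ((∃ T : Finset (Option (Fin n)), T.card = t ∧
          ∀ a ∈ T, ∀ b ∈ T, a ≠ b →
            Disjoint (Option.elim a Cc D) (Option.elim b Cc D)) ∧
        (∀ T : Finset (Option (Fin n)),
          (∀ a ∈ T, ∀ b ∈ T, a ≠ b →
            Disjoint (Option.elim a Cc D) (Option.elim b Cc D)) → T.card ≤ t)) ∧
      ((∃ S : Finset V, S.card = t ∧ ∀ j, (S ∩ D j).Nonempty) ∧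
        (∀ S : Finset V, (∀ j, (S ∩ D j).Nonempty) → t ≤ S.card)) ∧
      (∃ S : Finset V, S.card ≤ t + 1 ∧ (S ∩ Cc).Nonempty ∧
        ∀ j, (S ∩ D j).Nonempty) :=
  clustered_duality_with_central_general hn D Cc hCc hstar
end

section
/- For any digraph G, the order of a maximum induced acyclic sub-digraph of G is a lower bound on the minimum length of a scalar linear index code over F_q for the single unicast index coding problem defined by G: l ≥ MAIS(G). -/
/-!
Let `S` induce an acyclic sub-digraph. Two message vectors that agree outside `S` and have the
same codeword agree on `S`, by well-founded induction along the side-information edges inside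
`S`: receiver `a ∈ S` sees the same codeword and, by induction, the same side information, so it
decodes the same value. Hence `x ↦ (Enc x, x|_{Sᶜ})` is an injective linear map, which gives
`N ≤ l + (N - |S|)`.
-/

section

variable {V : Type*}

def IsAcyclicOn (E : V → V → Prop) (S : Set V) : Prop :=
  ∀ (v : V) (p : List V), v ∈ S → (∀ u ∈ p, u ∈ S) → ¬ List.IsChain E (v :: (p ++ [v]))

theorem exists_isChain_of_transGen_restrict {E : V → V → Prop} {S : Set V} {a b : S}
    (h : Relation.TransGen (fun x y : S => E x y) a b) :
    ∃ p : List V, (∀ u ∈ p, u ∈ S) ∧ List.IsChain E (a :: (p ++ [(b : V)])) := by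
  induction h using Relation.TransGen.head_induction_on with
  | single hab => exact ⟨[], by simp, .cons_cons hab (.singleton _)⟩
  | @head a c hac _ ih =>
    obtain ⟨p, hpS, hp⟩ := ih
    exact ⟨c :: p, List.forall_mem_cons.2 ⟨c.2, hpS⟩, .cons_cons hac hp⟩

theorem IsAcyclicOn.wellFounded {E : V → V → Prop} {S : Set V} [Finite S]
    (hS : IsAcyclicOn E S) : WellFounded (fun a b : S => E b a) := by
  have hirrefl : Std.Irrefl (Relation.TransGen fun a b : S => E b a) := ⟨fun a ha => by
    obtain ⟨p, hpS, hp⟩ := exists_isChain_of_transGen_restrict (Relation.transGen_swap.mp ha)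
    exact hS a p a.2 hpS hp⟩
  exact (Finite.wellFounded_of_trans_of_irrefl (Relation.TransGen fun a b : S => E b a)).mono
    fun _ _ h => .single h

theorem eq_of_encode_eq_of_eqOn_compl {α β : Type*} {E : V → V → Prop} (Enc : (V → α) → β)
    (Dec : ∀ i : V, β → ({j : V // E i j} → α) → α)
    (hDec : ∀ (x : V → α) (i : V), Dec i (Enc x) (fun j => x j.1) = x i)
    {S : Set V} (hS : WellFounded (fun a b : S => E b a)) {x y : V → α}
    (hEnc : Enc x = Enc y) (hoff : ∀ j ∉ S, x j = y j) : x = y := by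
  have hS_eq : ∀ a : S, x a = y a := fun a => by
    induction a using hS.induction with
    | _ a ih =>
      have hside : (fun j : {j // E a j} => x j.1) = fun j => y j.1 := funext fun j => by
        by_cases hj : j.1 ∈ S
        · exact ih ⟨j.1, hj⟩ j.2
        · exact hoff j.1 hj
      rw [← hDec x, ← hDec y, hEnc, hside]
  funext j
  by_cases hj : j ∈ S
  · exact hS_eq ⟨j, hj⟩
  · exact hoff j hj

theorem LinearMap.card_le_finrank_of_eq_of_eqOn_compl {K W : Type*} [Field K] [Fintype V]
    [AddCommGroup W] [Module K W] [FiniteDimensional K W] (f : (V → K) →ₗ[K] W) (S : Finset V)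
    (hf : ∀ x y : V → K, f x = f y → (∀ j ∉ S, x j = y j) → x = y) :
    S.card ≤ Module.finrank K W := by
  classical
  let g := f.prod (LinearMap.funLeft K K (Subtype.val : {j // j ∉ S} → V))
  have hg : Function.Injective g := fun x y hxy =>
    hf x y (congrArg Prod.fst hxy) fun j hj => congrFun (congrArg Prod.snd hxy) ⟨j, hj⟩
  have hcompl : Fintype.card {j // j ∉ S} = Fintype.card V - S.card := by
    simp [Fintype.card_subtype_compl]
  have hrank := LinearMap.finrank_le_finrank_of_injective hg
  rw [Module.finrank_prod, Module.finrank_fintype_fun_eq_card, Module.finrank_fintype_fun_eq_card,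
    hcompl] at hrank
  have hS := S.card_le_univ
  omega

end

/-- MAIS lower bound. For the single unicast index coding problem with
side-information digraph `E` on `Fin N`, any valid scalar linear index code of length `l`
over a field `F` satisfies `l ≥ MAIS(G)`: for every vertex set `S` inducing an acyclic
sub-digraph, `S.card ≤ l`. -/
theorem mais_lower_bound
    {F : Type*} [Field F] {N l : ℕ}
    (E : Fin N → Fin N → Prop)
    (Enc : (Fin N → F) →ₗ[F] (Fin l → F))
    (Dec : ∀ i : Fin N, (Fin l → F) → ({j : Fin N // E i j} → F) → F)
    (hDec : ∀ (x : Fin N → F) (i : Fin N),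
      Dec i (Enc x) (fun j => x j.1) = x i)
    (S : Finset (Fin N))
    (hS : ∀ (v : Fin N) (p : List (Fin N)), v ∈ S → (∀ u ∈ p, u ∈ S) →
      ¬ List.Chain E v (p ++ [v])) :
    S.card ≤ l := by
  -- `List.Chain E v l` unfolds to `List.IsChain E (v :: l)`, so `hS` is `IsAcyclicOn E ↑S`.
  have hwf : WellFounded (fun a b : (S : Set (Fin N)) => E b a) := IsAcyclicOn.wellFounded hS
  simpa using Enc.card_le_finrank_of_eq_of_eqOn_compl S fun x y hEnc hoff =>
    eq_of_encode_eq_of_eqOn_compl Enc Dec hDec hwf hEnc hoff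
end
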